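/- For every natural number n ≥ 1 and every real number r ≠ 0, the function s ↦ R_{n-1}(s) / s^{2n-1} is differentiable at r with derivative equal to -R_n(r) / r^{2n}. -/

import Mathlib

open MeasureTheory intervalIntegral

/-- Hermite's integral `R_n(s) = ∫_0^s ((s² - x²)ⁿ / (2ⁿ n!)) cos x dx`. -/
noncomputable def R (n : ℕ) (s : ℝ) : ℝ :=
  ∫ x in (0:ℝ)..s, ((s ^ 2 - x ^ 2) ^ n / (2 ^ n * n.factorial)) * Real.cos x

/-!
Substituting `x = s t` gives `R_n(s) = s^(2n+1) ρ_n(s)` with `ρ_n(s) = ∫_0^1 w_n(t) cos (s t) dt`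
and `w_n(t) = (1 - t²)ⁿ / (2ⁿ n!)`. Since `w_(n+1)' = -t w_n` and `w_(n+1)(1) = 0`, differentiating
under the integral sign and integrating by parts gives `ρ_n' = -s ρ_(n+1)`. As
`R_(n-1)(s) / s^(2n-1) = ρ_(n-1)(s)` for `s ≠ 0`, its derivative is `-s ρ_n(s) = -R_n(s) / s^(2n)`.
-/

open Real

theorem hasDerivAt_integral_mul_cos_mul {w : ℝ → ℝ} (hw : Continuous w) (a b s : ℝ) :
    HasDerivAt (fun s => ∫ t in a..b, w t * cos (s * t))
      (-∫ t in a..b, t * w t * sin (s * t)) s := by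
  have h_bound : ∀ t, ∀ x ∈ Set.univ, ‖-(t * w t * sin (x * t))‖ ≤ |t * w t| := by
    intro t x _
    rw [norm_neg, norm_mul, Real.norm_eq_abs, Real.norm_eq_abs]
    exact mul_le_of_le_one_right (abs_nonneg _) (abs_sin_le_one _)
  have h_diff : ∀ t, ∀ x ∈ Set.univ,
      HasDerivAt (fun x => w t * cos (x * t)) (-(t * w t * sin (x * t))) x := by
    intro t x _
    exact (((hasDerivAt_mul_const t).cos).const_mul (w t)).congr_deriv (by ring)
  rw [← intervalIntegral.integral_neg]
  exact (hasDerivAt_integral_of_dominated_loc_of_deriv_le Filter.univ_mem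
    (.of_forall fun x => (by fun_prop : Continuous _).aestronglyMeasurable)
    ((by fun_prop : Continuous _).intervalIntegrable _ _)
    (by fun_prop : Continuous _).aestronglyMeasurable
    (.of_forall fun t _ => h_bound t) ((by fun_prop : Continuous _).intervalIntegrable _ _)
    (.of_forall fun t _ => h_diff t)).2

noncomputable def hermiteWeight (n : ℕ) (t : ℝ) : ℝ :=
  (1 - t ^ 2) ^ n / (2 ^ n * n.factorial)

@[fun_prop]
theorem continuous_hermiteWeight (n : ℕ) : Continuous (hermiteWeight n) := by
  unfold hermiteWeight
  fun_prop

theorem hermiteWeight_succ_one (n : ℕ) : hermiteWeight (n + 1) 1 = 0 := by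
  simp [hermiteWeight]

theorem hasDerivAt_hermiteWeight_succ (n : ℕ) (t : ℝ) :
    HasDerivAt (hermiteWeight (n + 1)) (-(t * hermiteWeight n t)) t := by
  have h := (((hasDerivAt_pow 2 t).const_sub 1).pow (n + 1)).div_const
    (2 ^ (n + 1) * ((n + 1).factorial : ℝ))
  refine h.congr_deriv ?_
  simp only [hermiteWeight, Nat.factorial_succ]
  push_cast
  field_simp
  ring

noncomputable def rescaledR (n : ℕ) (s : ℝ) : ℝ :=
  ∫ t in (0:ℝ)..1, hermiteWeight n t * cos (s * t)

theorem R_eq_pow_mul_rescaledR (n : ℕ) (s : ℝ) : R n s = s ^ (2 * n + 1) * rescaledR n s := by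
  have hsubst := smul_integral_comp_mul_left (a := 0) (b := 1)
    (fun x => (s ^ 2 - x ^ 2) ^ n / (2 ^ n * n.factorial) * cos x) s
  have hcomp : ∀ t : ℝ, (s ^ 2 - (s * t) ^ 2) ^ n / (2 ^ n * n.factorial) * cos (s * t)
      = s ^ (2 * n) * (hermiteWeight n t * cos (s * t)) := by
    intro t
    rw [hermiteWeight, pow_mul, show s ^ 2 - (s * t) ^ 2 = s ^ 2 * (1 - t ^ 2) by ring, mul_pow]
    ring
  rw [mul_zero, mul_one, smul_eq_mul] at hsubst
  simp only [hcomp, intervalIntegral.integral_const_mul] at hsubst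
  rw [R, ← hsubst, rescaledR]
  ring

theorem R_div_pow_eq_rescaledR (n : ℕ) {s : ℝ} (hs : s ≠ 0) :
    R n s / s ^ (2 * n + 1) = rescaledR n s := by
  rw [R_eq_pow_mul_rescaledR]
  field_simp

theorem integral_mul_hermiteWeight_mul_sin (n : ℕ) (s : ℝ) :
    ∫ t in (0:ℝ)..1, t * hermiteWeight n t * sin (s * t) = s * rescaledR (n + 1) s := by
  have hibp := integral_mul_deriv_eq_deriv_mul (a := 0) (b := 1)
    (fun t _ => (hasDerivAt_const_mul s).sin)
    (fun t _ => hasDerivAt_hermiteWeight_succ n t)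
    ((by fun_prop : Continuous _).intervalIntegrable _ _)
    ((by fun_prop : Continuous _).intervalIntegrable _ _)
  simp only [hermiteWeight_succ_one, mul_zero, sin_zero, zero_mul, sub_zero, zero_sub, mul_neg,
    intervalIntegral.integral_neg, neg_inj] at hibp
  rw [rescaledR, ← intervalIntegral.integral_const_mul]
  convert hibp using 1 <;> (congr 1; funext t; ring)

theorem hasDerivAt_rescaledR (n : ℕ) (s : ℝ) :
    HasDerivAt (rescaledR n) (-(s * rescaledR (n + 1) s)) s := by
  have h := hasDerivAt_integral_mul_cos_mul (continuous_hermiteWeight n) 0 1 s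
  rwa [integral_mul_hermiteWeight_mul_sin] at h

theorem R_quotient_deriv (n : ℕ) (hn : 1 ≤ n) (r : ℝ) (hr : r ≠ 0) :
    HasDerivAt (fun s : ℝ => R (n - 1) s / s ^ (2 * n - 1)) (-(R n r) / r ^ (2 * n)) r := by
  obtain ⟨m, rfl⟩ := Nat.exists_eq_add_of_le' hn
  have hquot : (fun s : ℝ => R (m + 1 - 1) s / s ^ (2 * (m + 1) - 1)) =ᶠ[nhds r] rescaledR m := by
    filter_upwards [eventually_ne_nhds hr] with s hs
    rw [Nat.add_sub_cancel, show 2 * (m + 1) - 1 = 2 * m + 1 by omega, R_div_pow_eq_rescaledR m hs]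
  have hderiv : -(R (m + 1) r) / r ^ (2 * (m + 1)) = -(r * rescaledR (m + 1) r) := by
    rw [← R_div_pow_eq_rescaledR (m + 1) hr, pow_succ]
    field_simp
  rw [hderiv]
  exact (hasDerivAt_rescaledR m r).congr_of_eventuallyEq hquot
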